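/- arXiv:1905.08104 — 4 statements merged into one kernel-verified Lean document; each statement's English description precedes it below -/
import Mathlib

section
/- The function diam_r on nonempty closed subsets of a compact metric space is upper semicontinuous with respect to the Hausdorff metric: if A_n → B then limsup_n diam_r(A_n) ≤ diam_r(B). -/
/-!
Moving each point of an `r`-tuple in `A` to a nearest point of the compact set `B` costs at most
`hausdorffDist A B` per point, so every pairwise distance, and hence the minimal separation, drops
by at most twice that. Thus `diamr r A ≤ diamr r B + 2 * hausdorffDist A B`, and the right-hand
side tends to `diamr r B`.
-/

open Metric Filter

noncomputable def minSep {X : Type*} [MetricSpace X] {r : ℕ} (x : Fin r → X) : ℝ :=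
  ⨅ p : {p : Fin r × Fin r // p.1 ≠ p.2}, dist (x p.1.1) (x p.1.2)

noncomputable def diamr {X : Type*} [MetricSpace X] (r : ℕ) (B : Set X) : ℝ :=
  sSup { s | ∃ x : Fin r → X, (∀ i, x i ∈ B) ∧ s = minSep x }

open Topology

section MinSep

variable {X : Type*} [MetricSpace X] {r : ℕ}

lemma minSep_le_dist (x : Fin r → X) {i j : Fin r} (hij : i ≠ j) :
    minSep x ≤ dist (x i) (x j) :=
  ciInf_le (f := fun p : {p : Fin r × Fin r // p.1 ≠ p.2} => dist (x p.1.1) (x p.1.2))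
    ⟨0, by rintro _ ⟨p, rfl⟩; exact dist_nonneg⟩ ⟨(i, j), hij⟩

lemma minSep_le_add_two_mul (hr : 2 ≤ r) (x y : Fin r → X) {δ : ℝ}
    (h : ∀ i, dist (x i) (y i) ≤ δ) : minSep x ≤ minSep y + 2 * δ := by
  have : Nonempty {p : Fin r × Fin r // p.1 ≠ p.2} :=
    ⟨⟨(⟨0, by omega⟩, ⟨1, by omega⟩), by simp [Fin.ext_iff]⟩⟩
  rw [← sub_le_iff_le_add]
  refine le_ciInf fun ⟨(i, j), hij⟩ => ?_
  calc minSep x - 2 * δ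
      ≤ dist (x i) (x j) - dist (x i) (y i) - dist (x j) (y j) := by
        linarith [minSep_le_dist x hij, h i, h j]
    _ ≤ dist (y i) (y j) := by
        linarith [dist_triangle4 (x i) (y i) (y j) (x j), dist_comm (y j) (x j)]

lemma minSep_le_diam (hr : 2 ≤ r) {B : Set X} (hB : Bornology.IsBounded B) {x : Fin r → X}
    (hx : ∀ i, x i ∈ B) : minSep x ≤ diam B :=
  (minSep_le_dist x (i := ⟨0, by omega⟩) (j := ⟨1, by omega⟩) (by simp [Fin.ext_iff])).trans
    (dist_le_diam_of_mem hB (hx _) (hx _))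

end MinSep

section Diamr

variable {X : Type*} [MetricSpace X] {r : ℕ}

lemma diamr_nonneg (r : ℕ) (B : Set X) : 0 ≤ diamr r B :=
  Real.sSup_nonneg <| by
    rintro _ ⟨x, -, rfl⟩
    exact Real.iInf_nonneg fun _ => dist_nonneg

lemma minSep_le_diamr (hr : 2 ≤ r) {B : Set X} (hB : Bornology.IsBounded B) {x : Fin r → X}
    (hx : ∀ i, x i ∈ B) : minSep x ≤ diamr r B :=
  le_csSup ⟨diam B, by rintro _ ⟨y, hy, rfl⟩; exact minSep_le_diam hr hB hy⟩
    ⟨x, hx, rfl⟩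

lemma exists_mem_dist_le_hausdorffDist {A B : Set X} (hA : Bornology.IsBounded A)
    (hB : IsCompact B) (hBne : B.Nonempty) {x : X} (hx : x ∈ A) :
    ∃ y ∈ B, dist x y ≤ hausdorffDist A B := by
  obtain ⟨y, hyB, hy⟩ := hB.exists_infDist_eq_dist hBne x
  refine ⟨y, hyB, hy ▸ infDist_le_hausdorffDist_of_mem hx ?_⟩
  exact hausdorffEDist_ne_top_of_nonempty_of_bounded ⟨x, hx⟩ hBne hA hB.isBounded

lemma diamr_le_diamr_add_two_mul_hausdorffDist (hr : 2 ≤ r) {A B : Set X}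
    (hA : Bornology.IsBounded A) (hB : IsCompact B) (hBne : B.Nonempty) :
    diamr r A ≤ diamr r B + 2 * hausdorffDist A B := by
  refine Real.sSup_le ?_
    (add_nonneg (diamr_nonneg r B) (mul_nonneg zero_le_two hausdorffDist_nonneg))
  rintro _ ⟨x, hx, rfl⟩
  choose y hyB hy using fun i => exists_mem_dist_le_hausdorffDist hA hB hBne (hx i)
  exact (minSep_le_add_two_mul hr x y hy).trans
    (add_le_add_left (minSep_le_diamr hr hB.isBounded hyB) _)

end Diamr

theorem stmt2_general {X : Type*} [MetricSpace X] [CompactSpace X] (r : ℕ) (hr : 2 ≤ r)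
    (A : ℕ → Set X) (B : Set X)
    (hBc : IsClosed B) (hBne : B.Nonempty)
    (hconv : Tendsto (fun n => hausdorffDist (A n) B) atTop (nhds 0)) :
    limsup (fun n => diamr r (A n)) atTop ≤ diamr r B := by
  have hbound : Tendsto (fun n => diamr r B + 2 * hausdorffDist (A n) B) atTop
      (𝓝 (diamr r B)) := by
    simpa using tendsto_const_nhds.add (hconv.const_mul 2)
  calc limsup (fun n => diamr r (A n)) atTop
      ≤ limsup (fun n => diamr r B + 2 * hausdorffDist (A n) B) atTop :=
        limsup_le_limsup
          (.of_forall fun n => diamr_le_diamr_add_two_mul_hausdorffDist hr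
            isBounded_of_compactSpace hBc.isCompact hBne)
          (isCoboundedUnder_le_of_le atTop fun n => diamr_nonneg r (A n))
          hbound.isBoundedUnder_le
    _ = diamr r B := hbound.limsup_eq

theorem stmt2 {X : Type*} [MetricSpace X] [CompactSpace X] (r : ℕ) (hr : 2 ≤ r)
    (A : ℕ → Set X) (B : Set X)
    (hAc : ∀ n, IsClosed (A n)) (hAne : ∀ n, (A n).Nonempty)
    (hBc : IsClosed B) (hBne : B.Nonempty)
    (hconv : Tendsto (fun n => hausdorffDist (A n) B) atTop (nhds 0)) :
    limsup (fun n => diamr r (A n)) atTop ≤ diamr r B :=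
  stmt2_general r hr A B hBc hBne hconv
end

section
/- If a topological dynamical system (X,T) with invariant Borel probability measure μ is multi-r-sensitive for μ with sensitivity constant δ, then it is thickly r-sensitive for μ with the same constant δ. (Key step: for A of positive measure and L ∈ ℕ, each T^i A has positive measure since μ is T-invariant, so there is n_L ∈ ⋂_{i=0}^L N_T(T^i A, δ; r), giving {n_L, …, n_L + L} ⊆ N_T(A, δ; r).) -/
/-! Fix `U` of positive measure and `k : ℕ`. Since `T` preserves `μ`, every `T^i '' U` has
positive measure, so multi-sensitivity yields a time `n` lying in `N_T(T^i '' U, δ; r)` for all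
`i ≤ k`. A separated `r`-tuple in `T^i '' U` at time `n` pulls back to one in `U` at time `n + i`,
so `n, n + 1, …, n + k` all lie in `N_T(U, δ; r)`. -/

open Metric MeasureTheory

def Thick (A : Set ℕ) : Prop := ∀ k : ℕ, ∃ n : ℕ, ∀ i ≤ k, n + i ∈ A

def NT {X : Type*} [MetricSpace X] (T : X → X) (U : Set X) (δ : ℝ) (r : ℕ) : Set ℕ :=
  { n : ℕ | ∃ x : Fin r → X, (∀ i, x i ∈ U) ∧
      ∀ i j, i ≠ j → δ < dist (T^[n] (x i)) (T^[n] (x j)) }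

theorem MeasurableEmbedding.iterate {α : Type*} [MeasurableSpace α] {f : α → α}
    (hf : MeasurableEmbedding f) : ∀ n : ℕ, MeasurableEmbedding f^[n]
  | 0 => MeasurableEmbedding.id
  | n + 1 => (hf.iterate n).comp hf

theorem MeasureTheory.MeasurePreserving.measure_image_emb {α β : Type*} [MeasurableSpace α]
    [MeasurableSpace β] {μa : Measure α} {μb : Measure β} {f : α → β}
    (hf : MeasurePreserving f μa μb) (hfe : MeasurableEmbedding f) (s : Set α) :
    μb (f '' s) = μa s := by
  rw [← hf.measure_preimage_emb hfe, hfe.injective.preimage_image]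

theorem mem_NT_image_iterate_iff {X : Type*} [MetricSpace X] (T : X → X) (U : Set X) (δ : ℝ)
    (r n i : ℕ) : n ∈ NT T (T^[i] '' U) δ r ↔ n + i ∈ NT T U δ r := by
  simp only [NT, Set.mem_ofPred_eq, Function.iterate_add_apply]
  constructor
  · rintro ⟨x, hxU, hsep⟩
    choose y hyU hyx using hxU
    exact ⟨y, hyU, by simpa only [hyx] using hsep⟩
  · rintro ⟨y, hyU, hsep⟩
    exact ⟨fun j => T^[i] (y j), fun j => Set.mem_image_of_mem _ (hyU j), hsep⟩

theorem thick_NT_of_forall_nonempty_iInter {X : Type*} [MetricSpace X] (T : X → X) (U : Set X)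
    (δ : ℝ) (r : ℕ)
    (h : ∀ k : ℕ, (⋂ i : Fin (k + 1), NT T (T^[i] '' U) δ r).Nonempty) :
    Thick (NT T U δ r) := by
  intro k
  obtain ⟨n, hn⟩ := h k
  exact ⟨n, fun i hi =>
    (mem_NT_image_iterate_iff T U δ r n i).1 (Set.mem_iInter.1 hn ⟨i, Nat.lt_succ_of_le hi⟩)⟩

theorem stmt7_general {X : Type*} [MetricSpace X] [MeasurableSpace X] [BorelSpace X]
    (T : X ≃ₜ X) (μ : Measure X)
    (hinv : MeasurePreserving ⇑T μ μ)
    (r : ℕ) (δ : ℝ)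
    (hmulti : ∀ (k : ℕ) (U : Fin k → Set X), (∀ i, MeasurableSet (U i)) →
      (∀ i, 0 < μ (U i)) → (⋂ i, NT ⇑T (U i) δ r).Nonempty) :
    ∀ U : Set X, MeasurableSet U → 0 < μ U → Thick (NT ⇑T U δ r) := by
  intro U hU hμU
  have hemb (i : ℕ) : MeasurableEmbedding (⇑T)^[i] := T.measurableEmbedding.iterate i
  refine thick_NT_of_forall_nonempty_iInter T U δ r fun k => hmulti (k + 1) _
    (fun i => (hemb i).measurableSet_image' hU) fun i => ?_
  rwa [(hinv.iterate i).measure_image_emb (hemb i)]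

/-- Multi-`r`-sensitivity for `μ` with constant `δ` implies thick `r`-sensitivity for `μ`
with the same constant. -/
theorem stmt7 {X : Type*} [MetricSpace X] [CompactSpace X] [MeasurableSpace X] [BorelSpace X]
    (T : X ≃ₜ X) (μ : Measure X) [IsProbabilityMeasure μ]
    (hinv : MeasurePreserving ⇑T μ μ)
    (r : ℕ) (hr : 2 ≤ r) (δ : ℝ) (hδ : 0 < δ)
    (hmulti : ∀ (k : ℕ) (U : Fin k → Set X), (∀ i, MeasurableSet (U i)) →
      (∀ i, 0 < μ (U i)) → (⋂ i, NT ⇑T (U i) δ r).Nonempty) :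
    ∀ U : Set X, MeasurableSet U → 0 < μ U → Thick (NT ⇑T U δ r) :=
  stmt7_general T μ hinv r δ hmulti
end

section
/- Let (X,T) be a minimal TDS and π_eq its maximal equicontinuous factor map. If (X,T) is thickly r-sensitive with sensitivity constant δ, then no fiber π_eq^{-1}(y_0), y_0 ∈ X_eq, has cardinality at most r−1; equivalently, if some fiber of π_eq has at most r−1 points, then (X,T) is not thickly r-sensitive. -/
open Metric

/-- If some fiber of the maximal equicontinuous factor map has at most `r - 1` points,
then a minimal system `(X, T)` is not thickly `r`-sensitive. -/
theorem stmt12 {X Y : Type*} [MetricSpace X] [CompactSpace X] [MetricSpace Y] [CompactSpace Y]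
    (T : X ≃ₜ X) (S : Y ≃ₜ Y) (π : X → Y)
    (hπc : Continuous π) (hπs : Function.Surjective π)
    (hfac : ∀ x, π (T x) = S (π x))
    (hiso : Isometry ⇑S)
    (hmin : ∀ x : X, Dense (Set.range fun n : ℕ => (⇑T)^[n] x))
    (r : ℕ) (hr : 2 ≤ r)
    (hfib : ∃ y₀ : Y, (π ⁻¹' {y₀}).Finite ∧ (π ⁻¹' {y₀}).ncard ≤ r - 1) :
    ¬ ∃ δ : ℝ, 0 < δ ∧ ∀ U : Set X, IsOpen U → U.Nonempty → Thick (NT ⇑T U δ r) := by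
  rintro ⟨δ, hδ, hsens⟩
  obtain ⟨y₀, hFfin, hFcard⟩ := hfib
  set F := π ⁻¹' {y₀} with hFdef
  obtain ⟨x₀, hx₀⟩ := hπs y₀
  -- factor relation for iterates
  have hfacn : ∀ (n : ℕ) (x : X), π ((⇑T)^[n] x) = (⇑S)^[n] (π x) := by
    intro n
    induction n with
    | zero => intro x; simp
    | succ n ih =>
      intro x
      rw [Function.iterate_succ_apply', Function.iterate_succ_apply', hfac, ih]
  have hisoN : ∀ (n : ℕ) (a b : Y), dist ((⇑S)^[n] a) ((⇑S)^[n] b) = dist a b := by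
    intro n
    induction n with
    | zero => intro a b; simp
    | succ n ih =>
      intro a b
      rw [Function.iterate_succ_apply', Function.iterate_succ_apply', hiso.dist_eq, ih]
  -- the covering set V in X
  set V : Set X := ⋃ z ∈ F, Metric.ball z (δ / 2) with hVdef
  have hVopen : IsOpen V := isOpen_biUnion fun z _ => isOpen_ball
  have hFsubV : F ⊆ V := by
    intro z hz
    exact Set.mem_biUnion hz (by simp [mem_ball, hδ, half_pos hδ])
  -- find ε > 0 with π ⁻¹' ball y₀ ε ⊆ V
  have hε : ∃ ε > 0, π ⁻¹' Metric.ball y₀ ε ⊆ V := by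
    set C : Set X := Vᶜ with hCdef
    have hCcl : IsClosed C := hVopen.isClosed_compl
    have hCcomp : IsCompact C := hCcl.isCompact
    have hπC : IsClosed (π '' C) := (hCcomp.image hπc).isClosed
    have hy₀ : y₀ ∉ π '' C := by
      rintro ⟨x, hxC, hxπ⟩
      exact hxC (hFsubV hxπ)
    have : (π '' C)ᶜ ∈ nhds y₀ := hπC.isOpen_compl.mem_nhds hy₀
    obtain ⟨ε, hεpos, hball⟩ := Metric.mem_nhds_iff.mp this
    refine ⟨ε, hεpos, fun x hx => ?_⟩
    by_contra hxV
    exact hball hx ⟨x, hxV, rfl⟩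
  obtain ⟨ε, hεpos, hεsub⟩ := hε
  -- the open set U
  set U : Set X := π ⁻¹' Metric.ball y₀ (ε / 2) with hUdef
  have hUopen : IsOpen U := hπc.isOpen_preimage _ isOpen_ball
  have hUne : U.Nonempty := ⟨x₀, by simp [hUdef, hx₀, mem_ball, half_pos hεpos]⟩
  -- orbit closure of y₀ under S is compact; finite subcover gives syndeticity
  set K : Set Y := closure (Set.range fun n : ℕ => (⇑S)^[n] y₀) with hKdef
  have hKcomp : IsCompact K := isClosed_closure.isCompact
  have hKcover : K ⊆ ⋃ n : ℕ, Metric.ball ((⇑S)^[n] y₀) (ε / 2) := by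
    intro y hy
    obtain ⟨z, hz, hzy⟩ := Metric.mem_closure_iff.mp hy (ε / 2) (half_pos hεpos)
    obtain ⟨n, rfl⟩ := hz
    exact Set.mem_iUnion.mpr ⟨n, by simpa [mem_ball, dist_comm] using hzy⟩
  obtain ⟨s, hs⟩ := hKcomp.elim_finite_subcover _ (fun n => isOpen_ball) hKcover
  have hsne : s.Nonempty := by
    rcases s.eq_empty_or_nonempty with h | h
    · exfalso
      have hy₀K : y₀ ∈ K := subset_closure ⟨0, by simp⟩
      have := hs hy₀K
      simp [h] at this
    · exact h
  set N : ℕ := s.max' hsne with hNdef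
  -- syndeticity: for every m ≥ N there is p with m - N ≤ p ≤ m and S^[p] y₀ close to y₀
  have hsyn : ∀ m : ℕ, N ≤ m → ∃ p : ℕ, m - N ≤ p ∧ p ≤ m ∧
      dist ((⇑S)^[p] y₀) y₀ < ε / 2 := by
    intro m hm
    have hmK : (⇑S)^[m] y₀ ∈ K := subset_closure ⟨m, rfl⟩
    have := hs hmK
    obtain ⟨k, hk⟩ := Set.mem_iUnion.mp this
    simp only [Set.mem_iUnion] at hk
    obtain ⟨hks, hkball⟩ := hk
    have hkN : k ≤ N := s.le_max' k hks
    have hkm : k ≤ m := le_trans hkN hm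
    refine ⟨m - k, by omega, by omega, ?_⟩
    have heq : (⇑S)^[m] y₀ = (⇑S)^[k] ((⇑S)^[m - k] y₀) := by
      rw [← Function.iterate_add_apply]
      congr 1
      omega
    have : dist ((⇑S)^[k] ((⇑S)^[m - k] y₀)) ((⇑S)^[k] y₀) < ε / 2 := by
      rw [← heq]
      simpa [mem_ball] using hkball
    rwa [hisoN] at this
  -- thickness gives a time p in NT with S^[p] y₀ near y₀
  obtain ⟨n, hn⟩ := hsens U hUopen hUne N
  obtain ⟨p, hp1, hp2, hpdist⟩ := hsyn (n + N) (by omega)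
  have hpNT : p ∈ NT ⇑T U δ r := by
    have : p = n + (p - n) := by omega
    rw [this]
    exact hn (p - n) (by omega)
  obtain ⟨x, hxU, hxsep⟩ := hpNT
  -- each T^[p] (x i) lands in V
  have hland : ∀ i, (⇑T)^[p] (x i) ∈ V := by
    intro i
    apply hεsub
    have h1 : dist (π (x i)) y₀ < ε / 2 := hxU i
    have : dist (π ((⇑T)^[p] (x i))) y₀ < ε := by
      calc dist (π ((⇑T)^[p] (x i))) y₀
          ≤ dist ((⇑S)^[p] (π (x i))) ((⇑S)^[p] y₀) + dist ((⇑S)^[p] y₀) y₀ := by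
            rw [hfacn]; exact dist_triangle _ _ _
        _ = dist (π (x i)) y₀ + dist ((⇑S)^[p] y₀) y₀ := by rw [hisoN]
        _ < ε / 2 + ε / 2 := add_lt_add h1 hpdist
        _ = ε := by ring
    simpa [mem_ball] using this
  -- choose centers in F
  have hg : ∀ i : Fin r, ∃ z ∈ F, dist ((⇑T)^[p] (x i)) z < δ / 2 := by
    intro i
    obtain ⟨z, hz, hmem⟩ := Set.mem_iUnion₂.mp (hland i)
    exact ⟨z, hz, by simpa [mem_ball] using hmem⟩
  choose g hgF hgd using hg
  -- pigeonhole: g not injective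
  have hginj : ¬ Function.Injective g := by
    intro hinj
    have hsub : Set.range g ⊆ F := Set.range_subset_iff.mpr hgF
    have h1 : (Set.range g).ncard = r := by
      rw [← Nat.card_coe_set_eq, Nat.card_range_of_injective hinj, Nat.card_eq_fintype_card, Fintype.card_fin]
    have h2 : (Set.range g).ncard ≤ F.ncard := Set.ncard_le_ncard hsub hFfin
    omega
  rw [Function.not_injective_iff] at hginj
  obtain ⟨i, j, hgij, hij⟩ := hginj
  have hsep := hxsep i j hij
  have : dist ((⇑T)^[p] (x i)) ((⇑T)^[p] (x j)) < δ := by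
    calc dist ((⇑T)^[p] (x i)) ((⇑T)^[p] (x j))
        ≤ dist ((⇑T)^[p] (x i)) (g i) + dist (g i) ((⇑T)^[p] (x j)) := dist_triangle _ _ _
      _ < δ / 2 + δ / 2 := by
          apply add_lt_add (hgd i)
          rw [hgij, dist_comm]
          exact hgd j
      _ = δ := by ring
  linarith
end

section
/- If (X,T) is a minimal TDS whose maximal equicontinuous factor map π_eq has some finite fiber, then min_{y ∈ X_eq} #π_eq^{-1}(y) is attained and finite, and the set { y ∈ X_eq : #π_eq^{-1}(y) = m } is a dense G_δ subset of X_eq, where m = min_{y} #π_eq^{-1}(y). [Stated as: the fiber-cardinality function attains its minimum on a dense G_δ set.] -/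
/-!
Since `π` is a closed map, a fiber that lies in a union of `m` small balls keeps doing so over
a neighbourhood of its base point; letting the radius go to zero, the points whose fiber has at
most `m` elements form a `G_δ` set. For `m` the least finite fiber cardinality, this set consists
of the points whose fiber has exactly `m` elements. It contains the whole orbit of a point realising `m`,
because `T` maps fibers bijectively onto fibers, so it is dense by minimality of `S`.
-/

open Filter Metric Set Topology

theorem Function.Semiconj.preimage_singleton_apply {α β : Type*} {π : α → β} {T : α → α}
    {S : β → β} (h : Function.Semiconj π T S) (hT : Function.Surjective T)
    (hS : Function.Injective S) (y : β) : π ⁻¹' {S y} = T '' (π ⁻¹' {y}) := by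
  ext x
  constructor
  · intro hx
    obtain ⟨x, rfl⟩ := hT x
    exact ⟨x, hS ((h x).symm.trans hx), rfl⟩
  · rintro ⟨x, hx, rfl⟩
    exact (h x).trans (congrArg S hx)

theorem Function.Semiconj.encard_preimage_singleton_apply {α β : Type*} {π : α → β}
    {T : α → α} {S : β → β} (h : Function.Semiconj π T S) (hT : Function.Bijective T)
    (hS : Function.Injective S) (y : β) : (π ⁻¹' {S y}).encard = (π ⁻¹' {y}).encard := by
  rw [h.preimage_singleton_apply hT.surjective hS, hT.injective.encard_image]

theorem IsClosedMap.isOpen_setOf_preimage_singleton_subset {X Y : Type*} [TopologicalSpace X]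
    [TopologicalSpace Y] {f : X → Y} (hf : IsClosedMap f) {W : Set X} (hW : IsOpen W) :
    IsOpen {y | f ⁻¹' {y} ⊆ W} :=
  isOpen_iff_mem_nhds.2 fun y hy =>
    hf.eventually_nhds_fiber y fun _ hx => hW.mem_nhds (hy hx)

theorem Set.encard_le_of_forall_finset_subset {α : Type*} {s : Set α} {m : ℕ}
    (h : ∀ t : Finset α, ↑t ⊆ s → t.card ≤ m) : s.encard ≤ m := by
  by_contra! hlt
  obtain ⟨t, hts, htc⟩ := exists_subset_encard_eq (Order.add_one_le_of_lt hlt)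
  have ht : t.Finite := finite_of_encard_eq_coe htc
  have := h ht.toFinset (by simpa using hts)
  rw [ht.encard_eq_coe_toFinset_card] at htc
  norm_cast at htc
  omega

theorem Metric.encard_le_of_forall_subset_iUnion_ball {X : Type*} [MetricSpace X] {s : Set X}
    {m : ℕ} {r : ℕ → ℝ} (hr : Tendsto r atTop (𝓝 0))
    (h : ∀ n, ∃ F : Finset X, F.card ≤ m ∧ s ⊆ ⋃ x ∈ F, ball x (r n)) : s.encard ≤ m := by
  refine encard_le_of_forall_finset_subset fun t hts => ?_
  have hsep : ∀ᶠ n in atTop, ∀ a ∈ t, ∀ b ∈ t, a ≠ b → r n < dist a b / 2 :=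
    t.eventually_all.2 fun a _ => t.eventually_all.2 fun b _ =>
      eventually_imp_distrib_left.2 fun hab =>
        hr.eventually_lt_const (half_pos (dist_pos.2 hab))
  obtain ⟨n, hn⟩ := hsep.exists
  obtain ⟨F, hFm, hsF⟩ := h n
  have hcenter : ∀ a ∈ t, ∃ c ∈ F, dist a c < r n := fun a ha => by
    simpa using hsF (hts ha)
  choose! c hcF hac using hcenter
  refine le_trans (Finset.card_le_card_of_injOn c (fun a ha => hcF a ha) ?_) hFm
  intro a ha b hb hcab
  by_contra hab
  have hb' : dist b (c a) < r n := hcab ▸ hac b hb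
  linarith [hn a ha b hb hab, dist_triangle_right a b (c a), hac a ha]

theorem IsClosedMap.isGδ_setOf_encard_preimage_singleton_le {X Y : Type*} [MetricSpace X]
    [TopologicalSpace Y] {π : X → Y} (hπ : IsClosedMap π) (m : ℕ) :
    IsGδ {y | (π ⁻¹' {y}).encard ≤ m} := by
  have hcover : {y | (π ⁻¹' {y}).encard ≤ m} =
      ⋂ n : ℕ, ⋃ F ∈ {F : Finset X | F.card ≤ m},
        {y | π ⁻¹' {y} ⊆ ⋃ x ∈ F, ball x (1 / (n + 1))} := by
    ext y
    simp only [mem_ofPred_eq, mem_iInter, mem_iUnion, exists_prop]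
    refine ⟨fun hy n => ?_, encard_le_of_forall_subset_iUnion_ball
      tendsto_one_div_add_atTop_nhds_zero_nat⟩
    obtain ⟨hfin, hcard⟩ := encard_le_coe_iff_finite_ncard_le.1 hy
    refine ⟨hfin.toFinset, by rwa [← ncard_eq_toFinset_card _ hfin], fun x hx => ?_⟩
    exact mem_biUnion (hfin.mem_toFinset.2 hx) (mem_ball_self Nat.one_div_pos_of_nat)
  rw [hcover]
  exact .iInter fun n => IsOpen.isGδ <| isOpen_biUnion fun F _ =>
    hπ.isOpen_setOf_preimage_singleton_subset <| isOpen_biUnion fun x _ => isOpen_ball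

theorem stmt19_general {X Y : Type*} [MetricSpace X] [CompactSpace X] [MetricSpace Y]
    (T : X ≃ₜ X) (S : Y ≃ₜ Y) (π : X → Y)
    (hπc : Continuous π) (hπs : Function.Surjective π)
    (hfac : ∀ x, π (T x) = S (π x))
    (hminY : ∀ y : Y, Dense (Set.range fun n : ℕ => (⇑S)^[n] y))
    (hfin : ∃ y₀ : Y, (π ⁻¹' {y₀}).Finite) :
    ∃ m : ℕ, 0 < m ∧
      (∃ y : Y, (π ⁻¹' {y}).Finite ∧ (π ⁻¹' {y}).ncard = m) ∧
      (∀ y : Y, (π ⁻¹' {y}).Finite → m ≤ (π ⁻¹' {y}).ncard) ∧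
      ∃ G : Set Y, Dense G ∧ IsGδ G ∧
        ∀ y ∈ G, (π ⁻¹' {y}).Finite ∧ (π ⁻¹' {y}).ncard = m := by
  classical
  have hex : ∃ m : ℕ, ∃ y : Y, (π ⁻¹' {y}).Finite ∧ (π ⁻¹' {y}).ncard = m :=
    let ⟨y₀, hy₀⟩ := hfin; ⟨_, y₀, hy₀, rfl⟩
  obtain ⟨y₁, hy₁fin, hy₁card⟩ := Nat.find_spec hex
  have hmin : ∀ y : Y, (π ⁻¹' {y}).Finite → Nat.find hex ≤ (π ⁻¹' {y}).ncard :=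
    fun y hy => Nat.find_min' hex ⟨y, hy, rfl⟩
  have hpos : 0 < Nat.find hex :=
    hy₁card ▸ (ncard_pos hy₁fin).2 (hπs y₁)
  have horbit : range (fun n => (⇑S)^[n] y₁) ⊆ {y | (π ⁻¹' {y}).encard ≤ Nat.find hex} := by
    rintro _ ⟨n, rfl⟩
    rw [mem_ofPred_eq, ((Function.Semiconj.iterate_right hfac n).encard_preimage_singleton_apply
      (T.bijective.iterate n) (S.injective.iterate n)), ← hy₁card, hy₁fin.cast_ncard_eq]
  refine ⟨Nat.find hex, hpos, ⟨y₁, hy₁fin, hy₁card⟩, hmin, _, (hminY y₁).mono horbit,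
    hπc.isClosedMap.isGδ_setOf_encard_preimage_singleton_le _, fun y hy => ?_⟩
  obtain ⟨hfin, hle⟩ := encard_le_coe_iff_finite_ncard_le.1 hy
  exact ⟨hfin, hle.antisymm (hmin y hfin)⟩

/-- For a minimal system whose maximal equicontinuous factor map has some finite fiber,
the fiber-cardinality function attains a finite minimum `m`, and equals `m` on a dense
`G_δ` subset of the factor. -/
theorem stmt19 {X Y : Type*} [MetricSpace X] [CompactSpace X] [MetricSpace Y] [CompactSpace Y]
    (T : X ≃ₜ X) (S : Y ≃ₜ Y) (π : X → Y)
    (hπc : Continuous π) (hπs : Function.Surjective π)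
    (hfac : ∀ x, π (T x) = S (π x))
    (hminX : ∀ x : X, Dense (Set.range fun n : ℕ => (⇑T)^[n] x))
    (hminY : ∀ y : Y, Dense (Set.range fun n : ℕ => (⇑S)^[n] y))
    (heq : Equicontinuous fun n : ℕ => (⇑S)^[n])
    (hfin : ∃ y₀ : Y, (π ⁻¹' {y₀}).Finite) :
    ∃ m : ℕ, 0 < m ∧
      (∃ y : Y, (π ⁻¹' {y}).Finite ∧ (π ⁻¹' {y}).ncard = m) ∧
      (∀ y : Y, (π ⁻¹' {y}).Finite → m ≤ (π ⁻¹' {y}).ncard) ∧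
      ∃ G : Set Y, Dense G ∧ IsGδ G ∧
        ∀ y ∈ G, (π ⁻¹' {y}).Finite ∧ (π ⁻¹' {y}).ncard = m :=
  stmt19_general T S π hπc hπs hfac hminY hfin
end
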